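/- arXiv:2502.08569 — 2 statements merged into one kernel-verified Lean document; each statement's English description precedes it below -/
import Mathlib

section
/- Suppose F0* and F1* are distribution functions satisfying the mixture relations with π0 + π1 > 1 and π0, π1 ∈ (0,1]. If the recovered functions F0(t) = (π1·F0*(t) − (1−π0)·F1*(t))/(π0+π1−1) and F1(t) = (π0·F1*(t) − (1−π1)·F0*(t))/(π0+π1−1) are each nondecreasing, then they are distribution functions: F0, F1 map into [0,1], tend to 0 at −∞ and 1 at +∞ whenever F0* and F1* do. -/
/-!
Both recovered functions have the form `(p * F0* - q * F1*) / (p - q)` (resp. with the roles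
swapped), with `p - q = π0 + π1 - 1 ≠ 0`. Since `F0*` and `F1*` share their limits `0` and `1`,
such a combination has the same limits; a monotone function with limits `0` and `1` at the two
ends takes its values in `[0, 1]`.
-/

open Filter Topology

theorem Monotone.mem_Icc_of_tendsto {α β : Type*} [Preorder α] [IsDirectedOrder α]
    [IsCodirectedOrder α] [TopologicalSpace β] [Preorder β] [OrderClosedTopology β]
    {f : α → β} {a b : β} (hf : Monotone f) (ha : Tendsto f atBot (𝓝 a))
    (hb : Tendsto f atTop (𝓝 b)) (t : α) : f t ∈ Set.Icc a b :=
  ⟨hf.le_of_tendsto ha t, hf.ge_of_tendsto hb t⟩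

theorem Filter.Tendsto.mul_sub_mul_div {α : Type*} {l : Filter α} {F G : α → ℝ}
    {x p q d : ℝ} (hF : Tendsto F l (𝓝 x)) (hG : Tendsto G l (𝓝 x))
    (hpq : p - q = d) (hd : d ≠ 0) :
    Tendsto (fun t => (p * F t - q * G t) / d) l (𝓝 x) := by
  have hlim : (p * x - q * x) / d = x := by
    rw [← sub_mul, hpq, mul_div_cancel_left₀ x hd]
  simpa only [hlim] using ((hF.const_mul p).sub (hG.const_mul q)).div_const d

theorem recovered_distribution_functions_general
    (π0 π1 : ℝ)
    (hsum : 1 < π0 + π1)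
    (F0s F1s : ℝ → ℝ)
    (h0bot : Tendsto F0s atBot (nhds 0)) (h0top : Tendsto F0s atTop (nhds 1))
    (h1bot : Tendsto F1s atBot (nhds 0)) (h1top : Tendsto F1s atTop (nhds 1))
    (F0 F1 : ℝ → ℝ)
    (hF0 : ∀ t, F0 t = (π1 * F0s t - (1 - π0) * F1s t) / (π0 + π1 - 1))
    (hF1 : ∀ t, F1 t = (π0 * F1s t - (1 - π1) * F0s t) / (π0 + π1 - 1))
    (hF0mono : Monotone F0) (hF1mono : Monotone F1) :
    (∀ t, F0 t ∈ Set.Icc (0 : ℝ) 1) ∧ (∀ t, F1 t ∈ Set.Icc (0 : ℝ) 1) ∧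
    Tendsto F0 atBot (nhds 0) ∧ Tendsto F0 atTop (nhds 1) ∧
    Tendsto F1 atBot (nhds 0) ∧ Tendsto F1 atTop (nhds 1) := by
  have hd : π0 + π1 - 1 ≠ 0 := by linarith
  have hF0lim : ∀ {l : Filter ℝ} {x : ℝ}, Tendsto F0s l (𝓝 x) → Tendsto F1s l (𝓝 x) →
      Tendsto F0 l (𝓝 x) := fun h0 h1 =>
    (h0.mul_sub_mul_div h1 (by ring) hd).congr fun t => (hF0 t).symm
  have hF1lim : ∀ {l : Filter ℝ} {x : ℝ}, Tendsto F0s l (𝓝 x) → Tendsto F1s l (𝓝 x) →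
      Tendsto F1 l (𝓝 x) := fun h0 h1 =>
    (h1.mul_sub_mul_div h0 (by ring) hd).congr fun t => (hF1 t).symm
  have hF0bot := hF0lim h0bot h1bot
  have hF0top := hF0lim h0top h1top
  have hF1bot := hF1lim h0bot h1bot
  have hF1top := hF1lim h0top h1top
  exact ⟨hF0mono.mem_Icc_of_tendsto hF0bot hF0top, hF1mono.mem_Icc_of_tendsto hF1bot hF1top,
    hF0bot, hF0top, hF1bot, hF1top⟩

theorem recovered_distribution_functions
    (π0 π1 : ℝ) (hπ0 : π0 ∈ Set.Ioc (0 : ℝ) 1) (hπ1 : π1 ∈ Set.Ioc (0 : ℝ) 1)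
    (hsum : 1 < π0 + π1)
    (F0s F1s : ℝ → ℝ)
    (h0range : ∀ t, F0s t ∈ Set.Icc (0 : ℝ) 1) (h1range : ∀ t, F1s t ∈ Set.Icc (0 : ℝ) 1)
    (h0mono : Monotone F0s) (h1mono : Monotone F1s)
    (h0bot : Tendsto F0s atBot (nhds 0)) (h0top : Tendsto F0s atTop (nhds 1))
    (h1bot : Tendsto F1s atBot (nhds 0)) (h1top : Tendsto F1s atTop (nhds 1))
    (F0 F1 : ℝ → ℝ)
    (hF0 : ∀ t, F0 t = (π1 * F0s t - (1 - π0) * F1s t) / (π0 + π1 - 1))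
    (hF1 : ∀ t, F1 t = (π0 * F1s t - (1 - π1) * F0s t) / (π0 + π1 - 1))
    (hF0mono : Monotone F0) (hF1mono : Monotone F1) :
    (∀ t, F0 t ∈ Set.Icc (0 : ℝ) 1) ∧ (∀ t, F1 t ∈ Set.Icc (0 : ℝ) 1) ∧
    Tendsto F0 atBot (nhds 0) ∧ Tendsto F0 atTop (nhds 1) ∧
    Tendsto F1 atBot (nhds 0) ∧ Tendsto F1 atTop (nhds 1) :=
  recovered_distribution_functions_general π0 π1 hsum F0s F1s h0bot h0top h1bot h1top F0 F1 hF0 hF1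
    hF0mono hF1mono
end

section
/- Monotone likelihood ratio implies concave ROC: if f1 = exp(h)·f0 with h nondecreasing and f0 > 0 continuous on [0,1], then the ROC curve s ↦ 1 − F1(F0⁻¹(1−s)) is concave on [0,1]. -/
/-!
Since `f₀ > 0`, the quantile function `F₀⁻¹` is continuous and differentiable with derivative
`1 / f₀ ∘ F₀⁻¹`, so the ROC curve has slope `(f₁ / f₀) (F₀⁻¹ (1 - s)) = exp (h (F₀⁻¹ (1 - s)))`.
As `s` increases, `F₀⁻¹ (1 - s)` decreases, hence so does this slope because `h` is monotone; a
continuous function with antitone derivative is concave.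
-/

open Set Filter Topology

section InverseOnIcc

variable {α β : Type*} [LinearOrder α] [LinearOrder β] {F : α → β} {G : β → α}

theorem MonotoneOn.strictMonoOn_of_rightInvOn {s : Set α} {t : Set β} (hF : MonotoneOn F s)
    (hG : MapsTo G t s) (hFG : RightInvOn G F t) : StrictMonoOn G t := by
  intro x hx y hy hxy
  by_contra! hle
  have := hF (hG hy) (hG hx) hle
  rw [hFG hx, hFG hy] at this
  exact this.not_gt hxy

variable [TopologicalSpace α] [OrderTopology α] [DenselyOrdered α]
  [TopologicalSpace β] [OrderTopology β]

theorem MonotoneOn.continuousOn_Icc_of_surjOn {c d : β} {a b : α} (hG : MonotoneOn G (Icc c d))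
    (hmaps : MapsTo G (Icc c d) (Icc a b)) (hsurj : SurjOn G (Icc c d) (Icc a b)) :
    ContinuousOn G (Icc c d) := by
  rw [continuousOn_iff_continuous_domRestrict]
  have hmono : Monotone (hmaps.restrict G _ _) := fun x y hxy => hG x.2 y.2 hxy
  have hsurj' : Function.Surjective (hmaps.restrict G _ _) := by
    rintro ⟨x, hx⟩
    obtain ⟨y, hy, rfl⟩ := hsurj hx
    exact ⟨⟨y, hy⟩, rfl⟩
  exact continuous_subtype_val.comp (hmono.continuous_of_surjective hsurj')

theorem StrictMonoOn.continuousOn_of_rightInvOn {a b : α} {c d : β}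
    (hF : StrictMonoOn F (Icc a b)) (hFmaps : MapsTo F (Icc a b) (Icc c d))
    (hGmaps : MapsTo G (Icc c d) (Icc a b)) (hFG : RightInvOn G F (Icc c d)) :
    ContinuousOn G (Icc c d) :=
  (hF.monotoneOn.strictMonoOn_of_rightInvOn hGmaps hFG).monotoneOn.continuousOn_Icc_of_surjOn
    hGmaps ((hF.injOn.rightInvOn_of_leftInvOn hFG hFmaps hGmaps).surjOn hFmaps)

end InverseOnIcc

section Primitive

variable {f : ℝ → ℝ} {a b : ℝ}

theorem hasDerivAt_primitive_of_continuousOn (hf : ContinuousOn f (Icc a b)) {x : ℝ}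
    (hx : x ∈ Ioo a b) : HasDerivAt (fun y => ∫ t in a..y, f t) (f x) x :=
  intervalIntegral.integral_hasDerivAt_right
    ((hf.mono (Icc_subset_Icc le_rfl hx.2.le)).intervalIntegrable_of_Icc hx.1.le)
    ((hf.mono Ioo_subset_Icc_self).stronglyMeasurableAtFilter isOpen_Ioo x hx)
    (hf.continuousAt (Icc_mem_nhds hx.1 hx.2))

theorem continuousOn_primitive_of_continuousOn (hf : ContinuousOn f (Icc a b)) :
    ContinuousOn (fun y => ∫ t in a..y, f t) (Icc a b) := by
  rcases le_or_gt a b with hab | hba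
  · simpa only [uIcc_of_le hab] using
      intervalIntegral.continuousOn_primitive_interval' (hf.intervalIntegrable_of_Icc hab)
        left_mem_uIcc
  · simp only [Icc_eq_empty_of_lt hba, continuousOn_empty]

theorem strictMonoOn_primitive_of_pos (hf : ContinuousOn f (Icc a b))
    (hpos : ∀ x ∈ Ioo a b, 0 < f x) : StrictMonoOn (fun y => ∫ t in a..y, f t) (Icc a b) := by
  refine strictMonoOn_of_deriv_pos (convex_Icc a b) (continuousOn_primitive_of_continuousOn hf) ?_
  rw [interior_Icc]
  intro x hx
  rw [(hasDerivAt_primitive_of_continuousOn hf hx).deriv]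
  exact hpos x hx

end Primitive

def rocCurve (F₁ G : ℝ → ℝ) (s : ℝ) : ℝ :=
  1 - F₁ (G (1 - s))

theorem hasDerivAt_rocCurve {F₀ F₁ G : ℝ → ℝ} {f₀ f₁ s : ℝ} (hF₀ : HasDerivAt F₀ f₀ (G (1 - s)))
    (hF₁ : HasDerivAt F₁ f₁ (G (1 - s))) (hf₀ : f₀ ≠ 0) (hG : ContinuousAt G (1 - s))
    (hFG : ∀ᶠ y in 𝓝 (1 - s), F₀ (G y) = y) : HasDerivAt (rocCurve F₁ G) (f₁ / f₀) s := by
  have hG' : HasDerivAt G f₀⁻¹ (1 - s) := hF₀.of_local_left_inverse hG hf₀ hFG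
  have hflip : HasDerivAt (fun x => 1 - x) (-1) s := by
    simpa using (hasDerivAt_id s).const_sub 1
  rw [show f₁ / f₀ = -(f₁ * (f₀⁻¹ * -1)) by ring]
  exact (hF₁.comp s (hG'.comp s hflip)).const_sub 1

theorem concaveOn_rocCurve {F₀ F₁ G f₀ f₁ : ℝ → ℝ} (hGc : ContinuousOn G (Icc 0 1))
    (hGmaps : MapsTo G (Icc 0 1) (Icc 0 1)) (hGmono : StrictMonoOn G (Icc 0 1))
    (hFG : RightInvOn G F₀ (Icc 0 1)) (hF₁c : ContinuousOn F₁ (Icc 0 1))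
    (hF₀' : ∀ x ∈ Ioo 0 1, HasDerivAt F₀ (f₀ x) x) (hF₁' : ∀ x ∈ Ioo 0 1, HasDerivAt F₁ (f₁ x) x)
    (hf₀ : ∀ x ∈ Ioo 0 1, f₀ x ≠ 0) (hratio : MonotoneOn (fun x => f₁ x / f₀ x) (Ioo 0 1)) :
    ConcaveOn ℝ (Icc 0 1) (rocCurve F₁ G) := by
  have hflip : MapsTo (fun s : ℝ => 1 - s) (Icc 0 1) (Icc 0 1) :=
    fun s hs => ⟨by linarith [hs.2], by linarith [hs.1]⟩
  have hflip' : MapsTo (fun s : ℝ => 1 - s) (Ioo 0 1) (Ioo 0 1) :=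
    fun s hs => ⟨by linarith [hs.2], by linarith [hs.1]⟩
  have hGIoo : MapsTo G (Ioo 0 1) (Ioo 0 1) := fun y hy =>
    Ioo_subset_Ioo (hGmaps (left_mem_Icc.2 zero_le_one)).1
      (hGmaps (right_mem_Icc.2 zero_le_one)).2 (hGmono.mapsTo_Ioo hy)
  have hderiv : ∀ s ∈ Ioo (0 : ℝ) 1,
      HasDerivAt (rocCurve F₁ G) (f₁ (G (1 - s)) / f₀ (G (1 - s))) s := by
    intro s hs
    have hs' := hflip' hs
    have hG_mem := hGIoo hs'
    have hnhds : Icc 0 1 ∈ 𝓝 (1 - s) := Icc_mem_nhds hs'.1 hs'.2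
    exact hasDerivAt_rocCurve (hF₀' _ hG_mem) (hF₁' _ hG_mem) (hf₀ _ hG_mem)
      (hGc.continuousAt hnhds) (eventually_of_mem hnhds fun y hy => hFG hy)
  refine AntitoneOn.concaveOn_of_deriv (convex_Icc 0 1)
    (continuousOn_const.sub (hF₁c.comp (hGc.comp (by fun_prop) hflip) (hGmaps.comp hflip)))
    ?_ ?_ <;> rw [interior_Icc]
  · exact fun s hs => (hderiv s hs).differentiableAt.differentiableWithinAt
  · intro s hs s' hs' hss'
    rw [(hderiv s hs).deriv, (hderiv s' hs').deriv]
    exact hratio (hGIoo (hflip' hs')) (hGIoo (hflip' hs))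
      (hGmono.monotoneOn (Ioo_subset_Icc_self (hflip' hs')) (Ioo_subset_Icc_self (hflip' hs))
        (by linarith))

theorem mlr_implies_concave_roc_general
    (f0 h : ℝ → ℝ)
    (hf0c : ContinuousOn f0 (Set.Icc 0 1)) (hf0pos : ∀ t ∈ Set.Icc (0 : ℝ) 1, 0 < f0 t)
    (hhc : ContinuousOn h (Set.Icc 0 1)) (hhm : MonotoneOn h (Set.Icc 0 1))
    (f1 : ℝ → ℝ) (hf1 : ∀ t, f1 t = Real.exp (h t) * f0 t)
    (hf0int : ∫ t in (0:ℝ)..1, f0 t = 1)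
    (F0 F1 : ℝ → ℝ)
    (hF0 : ∀ t, F0 t = ∫ s in (0:ℝ)..t, f0 s)
    (hF1 : ∀ t, F1 t = ∫ s in (0:ℝ)..t, f1 s)
    (F0inv : ℝ → ℝ)
    (hinv_mem : ∀ s ∈ Set.Icc (0 : ℝ) 1, F0inv s ∈ Set.Icc (0 : ℝ) 1)
    (hinv : ∀ s ∈ Set.Icc (0 : ℝ) 1, F0 (F0inv s) = s) :
    ConcaveOn ℝ (Set.Icc 0 1) (fun s => 1 - F1 (F0inv (1 - s))) := by
  have hF0eq : F0 = fun t => ∫ s in (0:ℝ)..t, f0 s := funext hF0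
  have hF1eq : F1 = fun t => ∫ s in (0:ℝ)..t, f1 s := funext hF1
  have hf1c : ContinuousOn f1 (Icc 0 1) := (hhc.rexp.mul hf0c).congr fun t _ => hf1 t
  have hF0mono : StrictMonoOn F0 (Icc 0 1) :=
    hF0eq ▸ strictMonoOn_primitive_of_pos hf0c fun x hx => hf0pos x (Ioo_subset_Icc_self hx)
  have hF0maps : MapsTo F0 (Icc 0 1) (Icc 0 1) := by
    simpa only [hF0, intervalIntegral.integral_same, hf0int] using hF0mono.monotoneOn.mapsTo_Icc
  have hratio : ∀ x ∈ Ioo (0:ℝ) 1, Real.exp (h x) = f1 x / f0 x := fun x hx => by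
    rw [hf1, mul_div_cancel_right₀ _ (hf0pos x (Ioo_subset_Icc_self hx)).ne']
  exact concaveOn_rocCurve (hF0mono.continuousOn_of_rightInvOn hF0maps hinv_mem hinv) hinv_mem
    (hF0mono.monotoneOn.strictMonoOn_of_rightInvOn hinv_mem hinv) hinv
    (hF1eq ▸ continuousOn_primitive_of_continuousOn hf1c)
    (fun x hx => hF0eq ▸ hasDerivAt_primitive_of_continuousOn hf0c hx)
    (fun x hx => hF1eq ▸ hasDerivAt_primitive_of_continuousOn hf1c hx)
    (fun x hx => (hf0pos x (Ioo_subset_Icc_self hx)).ne')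
    ((Real.exp_monotone.comp_monotoneOn (hhm.mono Ioo_subset_Icc_self)).congr hratio)

theorem mlr_implies_concave_roc
    (f0 h : ℝ → ℝ)
    (hf0c : ContinuousOn f0 (Set.Icc 0 1)) (hf0pos : ∀ t ∈ Set.Icc (0 : ℝ) 1, 0 < f0 t)
    (hhc : ContinuousOn h (Set.Icc 0 1)) (hhm : MonotoneOn h (Set.Icc 0 1))
    (f1 : ℝ → ℝ) (hf1 : ∀ t, f1 t = Real.exp (h t) * f0 t)
    (hf0int : ∫ t in (0:ℝ)..1, f0 t = 1) (hf1int : ∫ t in (0:ℝ)..1, f1 t = 1)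
    (F0 F1 : ℝ → ℝ)
    (hF0 : ∀ t, F0 t = ∫ s in (0:ℝ)..t, f0 s)
    (hF1 : ∀ t, F1 t = ∫ s in (0:ℝ)..t, f1 s)
    (F0inv : ℝ → ℝ)
    (hinv_mem : ∀ s ∈ Set.Icc (0 : ℝ) 1, F0inv s ∈ Set.Icc (0 : ℝ) 1)
    (hinv : ∀ s ∈ Set.Icc (0 : ℝ) 1, F0 (F0inv s) = s)
    (hinv' : ∀ t ∈ Set.Icc (0 : ℝ) 1, F0inv (F0 t) = t) :
    ConcaveOn ℝ (Set.Icc 0 1) (fun s => 1 - F1 (F0inv (1 - s))) :=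
  mlr_implies_concave_roc_general f0 h hf0c hf0pos hhc hhm f1 hf1 hf0int F0 F1 hF0 hF1 F0inv
    hinv_mem hinv
end
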